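/- The quantity ∫_{−∞}^0 (1 − √(1 + (x − 1)e^{x})) dx − 1 is strictly positive. -/

import Mathlib

open Real MeasureTheory

-- bounds on u = (x-1) e^x for x ≤ 0
lemma aux_u_mem {x : ℝ} (hx : x ≤ 0) :
    -1 ≤ (x - 1) * Real.exp x ∧ (x - 1) * Real.exp x ≤ 0 := by
  have hp := Real.exp_pos x
  have h1 := Real.add_one_le_exp (-x)
  have h2 : Real.exp (-x) * Real.exp x = 1 := by rw [← Real.exp_add]; simp
  constructor
  · nlinarith [mul_le_mul_of_nonneg_right h1 hp.le]
  · nlinarith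

-- pointwise lower bound: g x ≤ f x for x ≤ 0
lemma aux_pointwise {x : ℝ} (hx : x ≤ 0) :
    (1 - x) * Real.exp x / 2 + (x - 1)^2 * Real.exp (2*x) / 8
      ≤ 1 - Real.sqrt (1 + (x - 1) * Real.exp x) := by
  obtain ⟨hu1, hu0⟩ := aux_u_mem hx
  set u := (x - 1) * Real.exp x with hu
  have hR : (0:ℝ) ≤ 1 + u/2 - u^2/8 := by nlinarith
  have hsq : 1 + u ≤ (1 + u/2 - u^2/8)^2 := by
    nlinarith [mul_nonneg (pow_nonneg (neg_nonneg.2 hu0) 3) (show (0:ℝ) ≤ 8 - u by linarith)]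
  have hs : Real.sqrt (1 + u) ≤ 1 + u/2 - u^2/8 := by
    calc Real.sqrt (1 + u) ≤ Real.sqrt ((1 + u/2 - u^2/8)^2) := Real.sqrt_le_sqrt hsq
    _ = 1 + u/2 - u^2/8 := Real.sqrt_sq hR
  have hgu : (1 - x) * Real.exp x / 2 + (x - 1)^2 * Real.exp (2*x) / 8 = -u/2 + u^2/8 := by
    rw [hu, two_mul, Real.exp_add]; ring
  rw [hgu]; linarith

-- upper bound on f and bounds on g for domination
lemma aux_f_bounds {x : ℝ} (hx : x ≤ 0) :
    0 ≤ 1 - Real.sqrt (1 + (x - 1) * Real.exp x) ∧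
    1 - Real.sqrt (1 + (x - 1) * Real.exp x) ≤ 2 * Real.exp (x/2) := by
  obtain ⟨hu1, hu0⟩ := aux_u_mem hx
  set u := (x - 1) * Real.exp x with hu
  have h0 : (0:ℝ) ≤ 1 + u := by linarith
  constructor
  · have : Real.sqrt (1 + u) ≤ 1 := Real.sqrt_le_one.2 (by linarith)
    linarith
  · have hself : 1 + u ≤ Real.sqrt (1 + u) := by
      calc 1 + u = Real.sqrt ((1+u)^2) := (Real.sqrt_sq h0).symm
      _ ≤ Real.sqrt (1 + u) := Real.sqrt_le_sqrt (by nlinarith)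
    -- -u = (1-x) e^x ≤ 2 exp(x/2)
    have h1 := Real.add_one_le_exp (-x/2)
    have hp2 := Real.exp_pos (x/2)
    have hE : Real.exp (-x/2) * Real.exp (x/2) = 1 := by
      rw [← Real.exp_add]; ring_nf; exact Real.exp_zero
    have hEx : Real.exp x = Real.exp (x/2) * Real.exp (x/2) := by
      rw [← Real.exp_add]; ring_nf
    have hub : -u ≤ 2 * Real.exp (x/2) := by
      have : (1 - x) * Real.exp (x/2) ≤ 2 * (Real.exp (-x/2) * Real.exp (x/2)) := by
        nlinarith [mul_le_mul_of_nonneg_right h1 hp2.le]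
      rw [hE] at this
      have := mul_le_mul_of_nonneg_right this hp2.le
      rw [hu]; nlinarith
    linarith

lemma aux_g_bounds {x : ℝ} (hx : x ≤ 0) :
    0 ≤ (1 - x) * Real.exp x / 2 + (x - 1)^2 * Real.exp (2*x) / 8 ∧
    (1 - x) * Real.exp x / 2 + (x - 1)^2 * Real.exp (2*x) / 8 ≤ 2 * Real.exp (x/2) := by
  obtain ⟨hu1, hu0⟩ := aux_u_mem hx
  have hq : (x - 1)^2 * Real.exp (2*x) = ((x-1) * Real.exp x)^2 := by
    rw [two_mul, Real.exp_add]; ring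
  constructor
  · have := Real.exp_pos x
    nlinarith [sq_nonneg ((x-1) * Real.exp x)]
  · obtain ⟨_, hfub⟩ := aux_f_bounds hx
    have hg := aux_pointwise hx
    obtain ⟨hf0, _⟩ := aux_f_bounds hx
    linarith

-- integrability of the dominating function
lemma aux_dom_int : IntegrableOn (fun x => 2 * Real.exp (x/2)) (Set.Iic (0:ℝ)) := by
  have h1 : Integrable ((Set.Iic (0:ℝ)).indicator Real.exp) :=
    (integrableOn_exp_Iic 0).integrable_indicator measurableSet_Iic
  have h2 := (integrable_comp_mul_left_iff ((Set.Iic (0:ℝ)).indicator Real.exp)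
    (R := (1:ℝ)/2) (by norm_num)).2 h1
  have h3 : (fun x => (Set.Iic (0:ℝ)).indicator Real.exp (1/2 * x))
      = (Set.Iic (0:ℝ)).indicator (fun x => Real.exp (x/2)) := by
    funext x
    simp only [Set.indicator_apply, Set.mem_Iic]
    by_cases hx : x ≤ 0
    · rw [if_pos (by linarith : (1:ℝ)/2*x ≤ 0), if_pos hx, show (1:ℝ)/2*x = x/2 by ring]
    · rw [if_neg (by intro h; exact hx (by linarith)), if_neg hx]
  rw [h3] at h2
  exact ((integrable_indicator_iff measurableSet_Iic).1 h2).const_mul 2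

lemma aux_g_int : IntegrableOn
    (fun x => (1 - x) * Real.exp x / 2 + (x - 1)^2 * Real.exp (2*x) / 8) (Set.Iic (0:ℝ)) := by
  refine Integrable.mono aux_dom_int ?_ ?_
  · exact (Continuous.aestronglyMeasurable (by continuity)).restrict
  · refine (ae_restrict_iff' measurableSet_Iic).2 (ae_of_all _ fun x hx => ?_)
    obtain ⟨h0, h1⟩ := aux_g_bounds (Set.mem_Iic.1 hx)
    rw [Real.norm_eq_abs, Real.norm_eq_abs, abs_of_nonneg h0,
      abs_of_nonneg (by positivity : (0:ℝ) ≤ 2 * Real.exp (x/2))]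
    exact h1

lemma aux_f_int : IntegrableOn
    (fun x => 1 - Real.sqrt (1 + (x - 1) * Real.exp x)) (Set.Iic (0:ℝ)) := by
  refine Integrable.mono aux_dom_int ?_ ?_
  · exact (Continuous.aestronglyMeasurable
      (continuous_const.sub ((Real.continuous_sqrt).comp (by continuity)))).restrict
  · refine (ae_restrict_iff' measurableSet_Iic).2 (ae_of_all _ fun x hx => ?_)
    obtain ⟨h0, h1⟩ := aux_f_bounds (Set.mem_Iic.1 hx)
    rw [Real.norm_eq_abs, Real.norm_eq_abs, abs_of_nonneg h0,
      abs_of_nonneg (by positivity : (0:ℝ) ≤ 2 * Real.exp (x/2))]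
    exact h1

lemma aux_x_exp_atBot : Filter.Tendsto (fun x : ℝ => x * Real.exp x) Filter.atBot (nhds 0) := by
  have h := (Real.tendsto_pow_mul_exp_neg_atTop_nhds_zero 1).comp Filter.tendsto_neg_atBot_atTop
  have h2 : (fun x : ℝ => x * Real.exp x) = fun x => -(((fun y : ℝ => y ^ 1 * Real.exp (-y)) ∘ Neg.neg) x) := by
    funext x; simp
  rw [h2]
  simpa using h.neg

lemma aux_g_integral : ∫ x in Set.Iic (0:ℝ),
    ((1 - x) * Real.exp x / 2 + (x - 1)^2 * Real.exp (2*x) / 8) = 37/32 := by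
  set G : ℝ → ℝ := fun x => (2 - x) * Real.exp x / 2 + (x^2/2 - 3*x/2 + 5/4) * Real.exp (2*x) / 8
    with hG
  have hderiv : ∀ x : ℝ, HasDerivAt G
      ((1 - x) * Real.exp x / 2 + (x - 1)^2 * Real.exp (2*x) / 8) x := by
    intro x
    have e1 : HasDerivAt (fun x : ℝ => (2 - x) * Real.exp x)
        ((0 - 1) * Real.exp x + (2 - x) * Real.exp x) x :=
      ((hasDerivAt_const x (2:ℝ)).sub (hasDerivAt_id x)).mul (Real.hasDerivAt_exp x)
    have eexp : HasDerivAt (fun x : ℝ => Real.exp (2*x)) (Real.exp (2*x) * 2) x := by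
      simpa using ((hasDerivAt_id x).const_mul 2).exp
    have e2 : HasDerivAt (fun x : ℝ => x^2/2 - 3*x/2 + 5/4) ((2:ℕ) * x ^ 1 / 2 - 3 * 1 / 2) x := by
      exact (((hasDerivAt_pow 2 x).div_const 2).sub (((hasDerivAt_id x).const_mul 3).div_const 2)).add_const (5/4)
    have := (e1.div_const 2).add ((e2.mul eexp).div_const 8)
    refine this.congr_deriv ?_
    ring
  have htend : Filter.Tendsto G Filter.atBot (nhds 0) := by
    have hX := aux_x_exp_atBot
    have hE := Real.tendsto_exp_atBot
    have h2 : Filter.Tendsto (fun x : ℝ =>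
        (2 * Real.exp x - x * Real.exp x) / 2 +
        ((x * Real.exp x)^2/2 - 3/2 * ((x * Real.exp x) * Real.exp x) + 5/4 * (Real.exp x * Real.exp x)) / 8)
        Filter.atBot (nhds ((2 * 0 - 0) / 2 + ((0:ℝ)^2/2 - 3/2 * (0 * 0) + 5/4 * (0 * 0)) / 8)) := by
      exact (((hE.const_mul 2).sub hX).div_const 2).add
        (((((hX.pow 2).div_const 2).sub ((hX.mul hE).const_mul (3/2))).add
          ((hE.mul hE).const_mul (5/4))).div_const 8)
    have h3 : G = fun x : ℝ =>
        (2 * Real.exp x - x * Real.exp x) / 2 +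
        ((x * Real.exp x)^2/2 - 3/2 * ((x * Real.exp x) * Real.exp x) + 5/4 * (Real.exp x * Real.exp x)) / 8 := by
      funext x
      rw [hG]
      simp only [two_mul, Real.exp_add]
      ring
    rw [h3]
    convert h2 using 2
    norm_num
  have := integral_Iic_of_hasDerivAt_of_tendsto' (a := (0:ℝ))
    (fun x _ => hderiv x) aux_g_int htend
  rw [this, hG]
  norm_num [Real.exp_zero]

theorem min_wave_speed_derivative_positive :
    0 < (∫ x in Set.Iic (0:ℝ), (1 - Real.sqrt (1 + (x - 1) * Real.exp x))) - 1 := by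
  have hmono : ∫ x in Set.Iic (0:ℝ),
      ((1 - x) * Real.exp x / 2 + (x - 1)^2 * Real.exp (2*x) / 8)
      ≤ ∫ x in Set.Iic (0:ℝ), (1 - Real.sqrt (1 + (x - 1) * Real.exp x)) :=
    setIntegral_mono_on aux_g_int aux_f_int measurableSet_Iic
      (fun x hx => aux_pointwise (Set.mem_Iic.1 hx))
  rw [aux_g_integral] at hmono
  linarith
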